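/- Let B : H → K be bounded linear between Hilbert spaces, μ ∈ range(B*) say μ = B*w, and for noisy data f^δ with ‖f^δ - Bμ‖ ≤ δ define μ_γ^δ = (B*B + γI)^{-1}B* f^δ. Then ‖μ_γ^δ - μ‖ ≤ (√γ/2)‖w‖ + δ/(2√γ); in particular, choosing γ = δ yields ‖μ_γ^δ - μ‖ ≤ (‖w‖ + 1)√δ/2. -/

import Mathlib

open ContinuousLinearMap

set_option maxHeartbeats 1000000 in
/-- Total error estimate for Tikhonov regularization under the source condition
`μ = B* w`: for noisy data `fδ` with `‖fδ - Bμ‖ ≤ δ`, the reconstruction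
`μ_γ^δ = (B*B + γI)⁻¹ B* fδ` satisfies
`‖μ_γ^δ - μ‖ ≤ (√γ/2)‖w‖ + δ/(2√γ)`; in particular choosing `γ = δ` gives
`‖μ_γ^δ - μ‖ ≤ (‖w‖ + 1)√δ/2`. -/
theorem stmt_18 {H K : Type*}
    [NormedAddCommGroup H] [InnerProductSpace ℂ H] [CompleteSpace H]
    [NormedAddCommGroup K] [InnerProductSpace ℂ K] [CompleteSpace K]
    (B : H →L[ℂ] K) (w : K) (μ : H) (hμ : μ = adjoint B w)
    (δ : ℝ) (hδ : 0 < δ) (fδ : K) (hnoise : ‖fδ - B μ‖ ≤ δ)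
    (γ : ℝ) (hγ : 0 < γ)
    (S : H →L[ℂ] H)
    (hS1 : (adjoint B ∘L B + (γ : ℂ) • (1 : H →L[ℂ] H)) * S = 1)
    (hS2 : S * (adjoint B ∘L B + (γ : ℂ) • (1 : H →L[ℂ] H)) = 1) :
    ‖S (adjoint B fδ) - μ‖ ≤ Real.sqrt γ / 2 * ‖w‖ + δ / (2 * Real.sqrt γ) ∧
    (γ = δ → ‖S (adjoint B fδ) - μ‖ ≤ (‖w‖ + 1) * Real.sqrt δ / 2) := by
  have sqγ : 0 < Real.sqrt γ := Real.sqrt_pos.mpr hγ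
  have hsq : Real.sqrt γ * Real.sqrt γ = γ := Real.mul_self_sqrt hγ.le
  -- Key estimate: ‖S (B* v)‖ ≤ ‖v‖ / (2√γ)
  have key : ∀ v : K, ‖S (adjoint B v)‖ ≤ ‖v‖ / (2 * Real.sqrt γ) := by
    intro v
    set x := S (adjoint B v) with hxdef
    have hTx : adjoint B (B x) + (γ:ℂ) • x = adjoint B v := by
      have := congrArg (fun T : H →L[ℂ] H => T (adjoint B v)) hS1
      simpa [mul_apply, add_apply, smul_apply, comp_apply] using this
    have h1 : (inner ℂ (adjoint B (B x) + (γ:ℂ) • x) x : ℂ) = inner ℂ (adjoint B v) x := by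
      rw [hTx]
    have h1' : ((‖B x‖^2 + γ * ‖x‖^2 : ℝ) : ℂ) = (inner ℂ v (B x) : ℂ) := by
      rw [← adjoint_inner_left B x v, ← h1]
      rw [inner_add_left, inner_smul_left, adjoint_inner_left]
      rw [inner_self_eq_norm_sq_to_K, inner_self_eq_norm_sq_to_K]
      push_cast
      ring_nf
      simp [Complex.ext_iff]
    have h2 : ‖B x‖^2 + γ * ‖x‖^2 ≤ ‖v‖ * ‖B x‖ := by
      have hre := congrArg Complex.re h1'
      simp only [Complex.ofReal_re] at hre
      have hle : (inner ℂ v (B x) : ℂ).re ≤ ‖(inner ℂ v (B x) : ℂ)‖ := Complex.re_le_norm _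
      have hni : ‖(inner ℂ v (B x) : ℂ)‖ ≤ ‖v‖ * ‖B x‖ := norm_inner_le_norm v (B x)
      linarith
    have hamgm : 2 * Real.sqrt γ * (‖x‖ * ‖B x‖) ≤ ‖B x‖^2 + γ * ‖x‖^2 := by
      nlinarith [sq_nonneg (‖B x‖ - Real.sqrt γ * ‖x‖)]
    rcases eq_or_lt_of_le (norm_nonneg (B x)) with hBx | hBx
    · rw [← hBx] at h2
      simp only [ne_eq, OfNat.ofNat_ne_zero, not_false_eq_true, zero_pow, mul_zero, zero_add] at h2
      have hx0 : ‖x‖ = 0 := by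
        by_contra h
        have hx : 0 < ‖x‖ := lt_of_le_of_ne (norm_nonneg x) (Ne.symm h)
        nlinarith [mul_pos hγ (mul_pos hx hx)]
      rw [hx0]
      positivity
    · rw [le_div_iff₀ (by positivity)]
      nlinarith [norm_nonneg x]
  subst hμ
  -- decomposition
  have hμeq : S (adjoint B (B (adjoint B w))) + (γ:ℂ) • S (adjoint B w) = adjoint B w := by
    have h : S ((adjoint B ∘L B + (γ:ℂ) • (1 : H →L[ℂ] H)) (adjoint B w)) = adjoint B w := by
      rw [← ContinuousLinearMap.mul_apply, hS2, ContinuousLinearMap.one_apply]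
    rw [ContinuousLinearMap.add_apply, ContinuousLinearMap.comp_apply,
      ContinuousLinearMap.smul_apply, ContinuousLinearMap.one_apply, map_add, map_smul] at h
    exact h
  have hdec : S (adjoint B fδ) - adjoint B w
      = S (adjoint B (fδ - B (adjoint B w))) - (γ:ℂ) • S (adjoint B w) := by
    have e1 : S (adjoint B fδ)
        = S (adjoint B (fδ - B (adjoint B w))) + S (adjoint B (B (adjoint B w))) := by
      rw [← map_add, ← map_add, sub_add_cancel]
    have h3 : S (adjoint B (B (adjoint B w))) = adjoint B w - (γ:ℂ) • S (adjoint B w) :=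
      eq_sub_of_add_eq hμeq
    rw [e1, h3]
    abel
  have hb1 : ‖S (adjoint B (fδ - B (adjoint B w)))‖ ≤ δ / (2 * Real.sqrt γ) := by
    refine le_trans (key _) ?_
    exact div_le_div_of_nonneg_right hnoise (by positivity)
  have hb2 : ‖(γ:ℂ) • S (adjoint B w)‖ ≤ Real.sqrt γ / 2 * ‖w‖ := by
    rw [norm_smul]
    have : ‖(γ:ℂ)‖ = γ := by
      simp [Complex.norm_real, abs_of_pos hγ]
    rw [this]
    calc γ * ‖S (adjoint B w)‖ ≤ γ * (‖w‖ / (2 * Real.sqrt γ)) := by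
          exact mul_le_mul_of_nonneg_left (key w) hγ.le
      _ = Real.sqrt γ / 2 * ‖w‖ := by
          field_simp
          linear_combination -‖w‖ * hsq
  have hmain : ‖S (adjoint B fδ) - adjoint B w‖
      ≤ Real.sqrt γ / 2 * ‖w‖ + δ / (2 * Real.sqrt γ) := by
    rw [hdec]
    refine le_trans (norm_sub_le _ _) ?_
    linarith
  refine ⟨hmain, fun hgd => ?_⟩
  subst hgd
  have hδγ : γ / (2 * Real.sqrt γ) = Real.sqrt γ / 2 := by
    field_simp
    linear_combination -1 * hsq
  rw [hδγ] at hmain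
  calc ‖S (adjoint B fδ) - adjoint B w‖ ≤ Real.sqrt γ / 2 * ‖w‖ + Real.sqrt γ / 2 := hmain
    _ = (‖w‖ + 1) * Real.sqrt γ / 2 := by ring
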